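/- Let p, q ∈ ℝ³ with p₃ + q₃ ≠ 0, set s = 2(p⁰q⁰ − p·q + 1), g = √(s−4) > 0, γ − 1 = |p+q|²/(√s(p⁰+q⁰+√s)) (assume p+q ≠ 0), and define Z = e₃ + (γ−1)(p₃+q₃)(p+q)/|p+q|². Then g|Z| = g·√((p₃+q₃)²((p₁+q₁)²+(p₂+q₂)²) + (√s(p⁰+q⁰+√s) + (p₃+q₃)²)²) / (√s(p⁰+q⁰+√s)), and consequently 1/(g|Z|) ≤ √s(p⁰+q⁰+√s) / (g(√s(p⁰+q⁰+√s)+(p₃+q₃)²)) ≤ 1/g. -/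

import Mathlib

noncomputable def energy (p : EuclideanSpace ℝ (Fin 3)) : ℝ := Real.sqrt (1 + ‖p‖ ^ 2)

noncomputable def e3 : EuclideanSpace ℝ (Fin 3) :=
  (EuclideanSpace.equiv (Fin 3) ℝ).symm ![0, 0, 1]

theorem hyperplane_Z_identity (p q : EuclideanSpace ℝ (Fin 3))
    (h3 : p 2 + q 2 ≠ 0) (hpq : p + q ≠ 0)
    (s g : ℝ) (hs : s = 2 * (energy p * energy q - (inner ℝ p q : ℝ) + 1))
    (hg : g = Real.sqrt (s - 4)) (hgpos : 0 < g)
    (Z : EuclideanSpace ℝ (Fin 3))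
    (hZ : Z = e3 + ((‖p + q‖ ^ 2 / (Real.sqrt s * (energy p + energy q + Real.sqrt s)))
          * (p 2 + q 2) / ‖p + q‖ ^ 2) • (p + q)) :
    g * ‖Z‖ =
        g * Real.sqrt ((p 2 + q 2) ^ 2 * ((p 0 + q 0) ^ 2 + (p 1 + q 1) ^ 2)
              + (Real.sqrt s * (energy p + energy q + Real.sqrt s) + (p 2 + q 2) ^ 2) ^ 2)
          / (Real.sqrt s * (energy p + energy q + Real.sqrt s)) ∧
      1 / (g * ‖Z‖) ≤
        Real.sqrt s * (energy p + energy q + Real.sqrt s)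
          / (g * (Real.sqrt s * (energy p + energy q + Real.sqrt s) + (p 2 + q 2) ^ 2)) ∧
      Real.sqrt s * (energy p + energy q + Real.sqrt s)
          / (g * (Real.sqrt s * (energy p + energy q + Real.sqrt s) + (p 2 + q 2) ^ 2))
        ≤ 1 / g := by
  have hs4 : 4 < s := by
    have h := Real.sqrt_pos.mp (hg ▸ hgpos)
    linarith
  have hsp : 0 < Real.sqrt s := Real.sqrt_pos.mpr (by linarith)
  have hEp : 0 < energy p := Real.sqrt_pos.mpr (by positivity)
  have hEq : 0 < energy q := Real.sqrt_pos.mpr (by positivity)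
  set A := Real.sqrt s * (energy p + energy q + Real.sqrt s) with hA
  have hApos : 0 < A := by positivity
  set c := (p 2 + q 2) / A with hc
  have hnpq : (‖p + q‖ : ℝ) ≠ 0 := norm_ne_zero_iff.mpr hpq
  have hZ' : Z = e3 + c • (p + q) := by
    rw [hZ]
    congr 2
    rw [hc]
    field_simp
  have hZi : ∀ i, Z i = e3 i + c * (p + q) i := by
    intro i; rw [hZ']; simp [mul_add]
  have he0 : e3 0 = 0 := by simp [e3]
  have he1 : e3 1 = 0 := by simp [e3]
  have he2 : e3 2 = 1 := by simp [e3]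
  set B := (p 2 + q 2) ^ 2 * ((p 0 + q 0) ^ 2 + (p 1 + q 1) ^ 2) with hB
  set D := A + (p 2 + q 2) ^ 2 with hD
  have hDpos : 0 < D := by positivity
  have hBnn : 0 ≤ B := by positivity
  set N := Real.sqrt (B + D ^ 2) with hN
  have hDN : D ≤ N := by
    have h := Real.sqrt_le_sqrt (show D ^ 2 ≤ B + D ^ 2 by nlinarith)
    rwa [Real.sqrt_sq hDpos.le] at h
  have hNpos : 0 < N := lt_of_lt_of_le hDpos hDN
  have hn : ‖Z‖ = N / A := by
    rw [EuclideanSpace.norm_eq]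
    rw [eq_div_iff hApos.ne', ← Real.sqrt_sq hApos.le, ← Real.sqrt_mul (by positivity)]
    congr 1
    simp only [Fin.sum_univ_three, hZi, he0, he1, he2, Real.norm_eq_abs, sq_abs,
      PiLp.add_apply]
    rw [hc, hB, hD]
    field_simp
    ring
  refine ⟨by rw [hn]; ring, ?_, ?_⟩
  · have heq : 1 / (g * ‖Z‖) = A / (g * N) := by
      rw [hn]; field_simp
    rw [heq]
    gcongr
  · have hAD : A ≤ D := hD ▸ le_add_of_nonneg_right (sq_nonneg _)
    rw [div_le_div_iff₀ (by positivity) hgpos]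
    calc A * g = g * A := mul_comm _ _
      _ ≤ g * D := mul_le_mul_of_nonneg_left hAD hgpos.le
      _ = 1 * (g * D) := (one_mul _).symm
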